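/- If V₁ = (Y₁, C₁, τ₁) and V₂ = (Y₂, C₂, τ₂) are two general infinitesimal symmetries of the SDE (μ, σ) (i.e. they satisfy Yᵢ(μ) − L(Yᵢ) + τᵢμ = 0 and [Yᵢ, σ] + (1/2)τᵢσ + σ·Cᵢ = 0), then their bracket [V₁, V₂] = ([Y₁, Y₂], Y₁(C₂) − Y₂(C₁) − {C₁, C₂}, Y₁(τ₂) − Y₂(τ₁)) is also a general infinitesimal symmetry of (μ, σ). -/

import Mathlib

open Matrix

/-- Partial derivative ∂ₖ f(x). -/
noncomputable def pd {n : ℕ} (f : (Fin n → ℝ) → ℝ) (k : Fin n) (x : Fin n → ℝ) : ℝ :=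
  fderiv ℝ f x (Pi.single k 1)

/-- The generator L = A^{ij}∂ᵢ∂ⱼ + b^i ∂ᵢ of the SDE (b, σ), A = (1/2)σσᵀ. -/
noncomputable def generator {n m : ℕ} (b : (Fin n → ℝ) → Fin n → ℝ)
    (σ : (Fin n → ℝ) → Matrix (Fin n) (Fin m) ℝ)
    (f : (Fin n → ℝ) → ℝ) (x : Fin n → ℝ) : ℝ :=
  (∑ i, ∑ j, ((1:ℝ)/2 * ∑ α, σ x i α * σ x j α) * pd (fun y => pd f j y) i x)
  + ∑ i, b x i * pd f i x

/-- The bracket [Y, σ]^i_j = Y^k ∂ₖ(σ^i_j) − σ^k_j ∂ₖ(Y^i). -/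
noncomputable def mbracket {n m : ℕ} (Y : (Fin n → ℝ) → Fin n → ℝ)
    (σ : (Fin n → ℝ) → Matrix (Fin n) (Fin m) ℝ) :
    (Fin n → ℝ) → Matrix (Fin n) (Fin m) ℝ :=
  fun x i j => (∑ k, Y x k * pd (fun y => σ y i j) k x)
    - ∑ k, σ x k j * pd (fun y => Y y i) k x

/-- The Lie bracket of vector fields. -/
noncomputable def vbracket {n : ℕ} (Y₁ Y₂ : (Fin n → ℝ) → Fin n → ℝ) :
    (Fin n → ℝ) → Fin n → ℝ :=
  fun x i => (∑ k, Y₁ x k * pd (fun y => Y₂ y i) k x)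
    - ∑ k, Y₂ x k * pd (fun y => Y₁ y i) k x

/-- The componentwise directional derivative Y(D). -/
noncomputable def dirDeriv {n p q : ℕ} (Y : (Fin n → ℝ) → Fin n → ℝ)
    (D : (Fin n → ℝ) → Matrix (Fin p) (Fin q) ℝ) :
    (Fin n → ℝ) → Matrix (Fin p) (Fin q) ℝ :=
  fun x i j => ∑ k, Y x k * pd (fun y => D y i j) k x

/-- (Y, C, τ) satisfies the determining equations of the SDE (b, σ) on M:
Y(μ) − L(Y) + τμ = 0 and [Y, σ] + (1/2)τσ + σ·C = 0. -/
def IsInfinitesimalSymmetry {n m : ℕ} (M : Set (Fin n → ℝ))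
    (b : (Fin n → ℝ) → Fin n → ℝ) (σ : (Fin n → ℝ) → Matrix (Fin n) (Fin m) ℝ)
    (Y : (Fin n → ℝ) → Fin n → ℝ) (C : (Fin n → ℝ) → Matrix (Fin m) (Fin m) ℝ)
    (τ : (Fin n → ℝ) → ℝ) : Prop :=
  (∀ x ∈ M, ∀ i, (∑ k, Y x k * pd (fun y => b y i) k x)
      - generator b σ (fun y => Y y i) x + τ x * b x i = 0) ∧
  (∀ x ∈ M, mbracket Y σ x + (τ x / 2) • σ x + σ x * C x = 0)


open Topology
section Tools
variable {n : ℕ} {M : Set (Fin n → ℝ)} {x : Fin n → ℝ} {f g : (Fin n → ℝ) → ℝ}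

lemma pd_congr (hM : IsOpen M) (h : ∀ y ∈ M, f y = g y) (hx : x ∈ M) (k : Fin n) :
    pd f k x = pd g k x := by
  have : f =ᶠ[𝓝 x] g := Filter.eventuallyEq_of_mem (hM.mem_nhds hx) h
  unfold pd; rw [this.fderiv_eq]

lemma diffAt {F : Type*} [NormedAddCommGroup F] [NormedSpace ℝ F]
    {f : (Fin n → ℝ) → F} (hM : IsOpen M) (hf : ContDiffOn ℝ (⊤ : ℕ∞) f M) (hx : x ∈ M) :
    DifferentiableAt ℝ f x :=
  ((hf.differentiableOn (by simp)).differentiableAt (hM.mem_nhds hx))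

lemma pd_add (hf : DifferentiableAt ℝ f x) (hg : DifferentiableAt ℝ g x) (k : Fin n) :
    pd (fun y => f y + g y) k x = pd f k x + pd g k x := by
  unfold pd; rw [fderiv_fun_add hf hg]; rfl

lemma pd_sub (hf : DifferentiableAt ℝ f x) (hg : DifferentiableAt ℝ g x) (k : Fin n) :
    pd (fun y => f y - g y) k x = pd f k x - pd g k x := by
  unfold pd; rw [fderiv_fun_sub hf hg]; rfl

lemma pd_mul (hf : DifferentiableAt ℝ f x) (hg : DifferentiableAt ℝ g x) (k : Fin n) :
    pd (fun y => f y * g y) k x = f x * pd g k x + g x * pd f k x := by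
  unfold pd; rw [fderiv_fun_mul hf hg]; rfl

lemma pd_const (c : ℝ) (k : Fin n) : pd (fun _ => c) k x = 0 := by
  unfold pd; rw [fderiv_fun_const]; rfl

lemma pd_sum {ι : Type*} (s : Finset ι) {F : ι → (Fin n → ℝ) → ℝ}
    (hF : ∀ i ∈ s, DifferentiableAt ℝ (F i) x) (k : Fin n) :
    pd (fun y => ∑ i ∈ s, F i y) k x = ∑ i ∈ s, pd (F i) k x := by
  unfold pd; rw [fderiv_fun_sum hF]; simp

lemma pd_const_mul (hf : DifferentiableAt ℝ f x) (c : ℝ) (k : Fin n) :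
    pd (fun y => c * f y) k x = c * pd f k x := by
  unfold pd; rw [fderiv_const_mul hf]; rfl

lemma pd_div_const (hf : DifferentiableAt ℝ f x) (c : ℝ) (k : Fin n) :
    pd (fun y => f y / c) k x = pd f k x / c := by
  have h : (fun y => f y / c) = fun y => c⁻¹ * f y := funext fun y => by
    rw [div_eq_inv_mul]
  rw [h, pd_const_mul hf, div_eq_inv_mul]

lemma contDiffOn_pd (hM : IsOpen M) (hf : ContDiffOn ℝ (⊤ : ℕ∞) f M) (k : Fin n) :
    ContDiffOn ℝ (⊤ : ℕ∞) (pd f k) M := by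
  have h1 : ContDiffOn ℝ (⊤ : ℕ∞) (fderiv ℝ f) M := hf.fderiv_of_isOpen hM (by simp)
  exact h1.clm_apply contDiffOn_const

lemma pd_comm (hM : IsOpen M) (hf : ContDiffOn ℝ (⊤ : ℕ∞) f M) (hx : x ∈ M) (j k : Fin n) :
    pd (pd f j) k x = pd (pd f k) j x := by
  have hd : ∀ᶠ y in 𝓝 x, HasFDerivAt f (fderiv ℝ f y) y := by
    filter_upwards [hM.mem_nhds hx] with y hy using (diffAt hM hf hy).hasFDerivAt
  have hg : DifferentiableAt ℝ (fderiv ℝ f) x :=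
    diffAt hM (hf.fderiv_of_isOpen hM (by simp)) hx
  have symm := second_derivative_symmetric_of_eventually hd hg.hasFDerivAt
  have e : ∀ (v : Fin n → ℝ) (w : Fin n), pd (fun y => fderiv ℝ f y v) w x
      = fderiv ℝ (fderiv ℝ f) x (Pi.single w 1) v := by
    intro v w
    unfold pd
    rw [fderiv_clm_apply hg (differentiableAt_const v)]
    simp
  show pd (fun y => fderiv ℝ f y _) k x = pd (fun y => fderiv ℝ f y _) j x
  rw [e, e, symm]

lemma pd_zero_of (hM : IsOpen M) (h : ∀ y ∈ M, f y = 0) (hx : x ∈ M) (k : Fin n) :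
    pd f k x = 0 := by
  rw [pd_congr hM h hx k, pd_const]

/-- expand pd of a finite sum of products -/
lemma pd_sum_mul (hM : IsOpen M) {ι : Type*} [Fintype ι] {f g : ι → (Fin n → ℝ) → ℝ}
    (hf : ∀ i, ContDiffOn ℝ (⊤ : ℕ∞) (f i) M) (hg : ∀ i, ContDiffOn ℝ (⊤ : ℕ∞) (g i) M)
    (hx : x ∈ M) (k : Fin n) :
    pd (fun y => ∑ i, f i y * g i y) k x
      = ∑ i, (f i x * pd (g i) k x + g i x * pd (f i) k x) := by
  rw [pd_sum Finset.univ (fun i _ => (diffAt hM (hf i) hx).fun_mul (diffAt hM (hg i) hx)) k]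
  exact Finset.sum_congr rfl fun i _ => pd_mul (diffAt hM (hf i) hx) (diffAt hM (hg i) hx) k

lemma smooth_sum_mul (hM : IsOpen M) {ι : Type*} [Fintype ι] {f g : ι → (Fin n → ℝ) → ℝ}
    (hf : ∀ i, ContDiffOn ℝ (⊤ : ℕ∞) (f i) M) (hg : ∀ i, ContDiffOn ℝ (⊤ : ℕ∞) (g i) M) :
    ContDiffOn ℝ (⊤ : ℕ∞) (fun y => ∑ i, f i y * g i y) M := by
  apply ContDiffOn.sum (fun i _ => (hf i).mul (hg i))

lemma smooth_comp {p : ℕ} {F : Type*} [NormedAddCommGroup F] [NormedSpace ℝ F]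
    {Y : (Fin n → ℝ) → Fin p → F}
    (hY : ContDiffOn ℝ (⊤ : ℕ∞) Y M) (k : Fin p) : ContDiffOn ℝ (⊤ : ℕ∞) (fun y => Y y k) M :=
  (ContinuousLinearMap.proj (R := ℝ) (φ := fun _ : Fin p => F) k).contDiff.comp_contDiffOn hY

lemma smooth_comp2 {p q : ℕ} {σ : (Fin n → ℝ) → Matrix (Fin p) (Fin q) ℝ}
    (hσ : ContDiffOn ℝ (⊤ : ℕ∞) (fun x i α => σ x i α : (Fin n → ℝ) → Fin p → Fin q → ℝ) M)
    (i : Fin p) (α : Fin q) : ContDiffOn ℝ (⊤ : ℕ∞) (fun y => σ y i α) M :=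
  smooth_comp (smooth_comp hσ i) α

end Tools

section Sym
variable {n m : ℕ} {M : Set (Fin n → ℝ)}
  {σ : (Fin n → ℝ) → Matrix (Fin n) (Fin m) ℝ}
  {Y : (Fin n → ℝ) → Fin n → ℝ} {C : (Fin n → ℝ) → Matrix (Fin m) (Fin m) ℝ}
  {τ : (Fin n → ℝ) → ℝ}

lemma e2val (h : ∀ x ∈ M, mbracket Y σ x + (τ x / 2) • σ x + σ x * C x = 0) :
    ∀ x ∈ M, ∀ c α, (∑ k, Y x k * pd (fun y => σ y c α) k x)
      - (∑ k, σ x k α * pd (fun y => Y y c) k x) + τ x / 2 * σ x c α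
      + (∑ β, σ x c β * C x β α) = 0 := by
  intro x hx c α
  have := congrFun (congrFun (h x hx) c) α
  simpa [mbracket, Matrix.add_apply, Matrix.mul_apply, Matrix.smul_apply, smul_eq_mul,
    add_assoc] using this

lemma e2deriv (hM : IsOpen M)
    (hσ : ContDiffOn ℝ (⊤ : ℕ∞) (fun x i α => σ x i α : (Fin n → ℝ) → Fin n → Fin m → ℝ) M)
    (hY : ContDiffOn ℝ (⊤ : ℕ∞) Y M)
    (hC : ContDiffOn ℝ (⊤ : ℕ∞) (fun x i j => C x i j : (Fin n → ℝ) → Fin m → Fin m → ℝ) M)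
    (hτ : ContDiffOn ℝ (⊤ : ℕ∞) τ M)
    (h : ∀ x ∈ M, mbracket Y σ x + (τ x / 2) • σ x + σ x * C x = 0) :
    ∀ x ∈ M, ∀ i α (p : Fin n),
      ((∑ k, (Y x k * pd (pd (fun y => σ y i α) k) p x
          + pd (fun y => σ y i α) k x * pd (fun y => Y y k) p x))
      - (∑ k, (σ x k α * pd (pd (fun y => Y y i) k) p x
          + pd (fun y => Y y i) k x * pd (fun y => σ y k α) p x)))
      + (τ x / 2 * pd (fun y => σ y i α) p x + σ x i α * (pd τ p x / 2))
      + (∑ β, (σ x i β * pd (fun y => C y β α) p x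
          + C x β α * pd (fun y => σ y i β) p x)) = 0 := by
  intro x hx i α p
  have dS1 : DifferentiableAt ℝ (fun y => ∑ k, Y y k * pd (fun z => σ z i α) k y) x :=
    diffAt hM (smooth_sum_mul hM (fun k => smooth_comp hY k)
      (fun k => contDiffOn_pd hM (smooth_comp2 hσ i α) k)) hx
  have dS2 : DifferentiableAt ℝ (fun y => ∑ k, σ y k α * pd (fun z => Y z i) k y) x :=
    diffAt hM (smooth_sum_mul hM (fun k => smooth_comp2 hσ k α)
      (fun k => contDiffOn_pd hM (smooth_comp hY i) k)) hx
  have dτ2 : DifferentiableAt ℝ (fun y => τ y / 2) x := by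
    simpa [div_eq_mul_inv] using (diffAt hM hτ hx).mul_const (2:ℝ)⁻¹
  have dP : DifferentiableAt ℝ (fun y => τ y / 2 * σ y i α) x :=
    dτ2.mul (diffAt hM (smooth_comp2 hσ i α) hx)
  have dS3 : DifferentiableAt ℝ (fun y => ∑ β, σ y i β * C y β α) x :=
    diffAt hM (smooth_sum_mul hM (fun β => smooth_comp2 hσ i β)
      (fun β => smooth_comp2 hC β α)) hx
  have h0 : pd (fun y => (∑ k, Y y k * pd (fun z => σ z i α) k y)
      - (∑ k, σ y k α * pd (fun z => Y z i) k y) + τ y / 2 * σ y i α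
      + (∑ β, σ y i β * C y β α)) p x = 0 :=
    pd_zero_of hM (fun y hy => e2val h y hy i α) hx p
  rw [pd_add ((dS1.fun_sub dS2).fun_add dP) dS3, pd_add (dS1.fun_sub dS2) dP, pd_sub dS1 dS2,
    pd_sum_mul hM (fun k => smooth_comp hY k)
      (fun k => contDiffOn_pd hM (smooth_comp2 hσ i α) k) hx,
    pd_sum_mul hM (fun k => smooth_comp2 hσ k α)
      (fun k => contDiffOn_pd hM (smooth_comp hY i) k) hx,
    pd_mul dτ2 (diffAt hM (smooth_comp2 hσ i α) hx),
    pd_div_const (diffAt hM hτ hx),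
    pd_sum_mul hM (fun β => smooth_comp2 hσ i β) (fun β => smooth_comp2 hC β α) hx] at h0
  exact h0

end Sym

set_option maxHeartbeats 2000000 in
lemma sigmaAlg {n m : ℕ} (Y1 Y2 : Fin n → ℝ) (P1 P2 : Fin n → Fin n → ℝ)
    (PP1 PP2 : Fin n → Fin n → Fin n → ℝ) (S : Fin n → Fin m → ℝ)
    (PS : Fin n → Fin m → Fin n → ℝ) (PPS : Fin n → Fin m → Fin n → Fin n → ℝ)
    (U1 U2 : ℝ) (PU1 PU2 : Fin n → ℝ)
    (C1 C2 : Fin m → Fin m → ℝ) (PC1 PC2 : Fin m → Fin m → Fin n → ℝ)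
    (i : Fin n) (α : Fin m)
    (hsymS : ∀ c β p k, PPS c β p k = PPS c β k p)
    (hsym1 : ∀ c p k, PP1 c p k = PP1 c k p)
    (hsym2 : ∀ c p k, PP2 c p k = PP2 c k p)
    (hV1 : ∀ c β, (∑ k, Y1 k * PS c β k) - (∑ k, S k β * P1 c k) + U1 * S c β
      + (∑ γ, S c γ * C1 γ β) = 0)
    (hV2 : ∀ c β, (∑ k, Y2 k * PS c β k) - (∑ k, S k β * P2 c k) + U2 * S c β
      + (∑ γ, S c γ * C2 γ β) = 0)
    (hD1 : ∀ p, ((∑ k, (Y1 k * PPS i α p k + PS i α k * P1 k p))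
      - (∑ k, (S k α * PP1 i p k + P1 i k * PS k α p)))
      + (U1 * PS i α p + S i α * PU1 p)
      + (∑ γ, (S i γ * PC1 γ α p + C1 γ α * PS i γ p)) = 0)
    (hD2 : ∀ p, ((∑ k, (Y2 k * PPS i α p k + PS i α k * P2 k p))
      - (∑ k, (S k α * PP2 i p k + P2 i k * PS k α p)))
      + (U2 * PS i α p + S i α * PU2 p)
      + (∑ γ, (S i γ * PC2 γ α p + C2 γ α * PS i γ p)) = 0) :
    (∑ k, ((∑ p, Y1 p * P2 k p) - ∑ p, Y2 p * P1 k p) * PS i α k)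
    - (∑ k, S k α * ((∑ p, (Y1 p * PP2 i k p + P2 i p * P1 p k))
        - ∑ p, (Y2 p * PP1 i k p + P1 i p * P2 p k)))
    + ((∑ p, Y1 p * PU2 p) - ∑ p, Y2 p * PU1 p) * S i α
    + (∑ β, S i β * ((∑ p, Y1 p * PC2 β α p) - (∑ p, Y2 p * PC1 β α p)
        - ((∑ γ, C1 β γ * C2 γ α) - ∑ γ, C2 β γ * C1 γ α))) = 0 := by
  have c1 : ∑ p, Y1 p * (((∑ k, (Y2 k * PPS i α p k + PS i α k * P2 k p))
      - (∑ k, (S k α * PP2 i p k + P2 i k * PS k α p)))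
      + (U2 * PS i α p + S i α * PU2 p)
      + (∑ γ, (S i γ * PC2 γ α p + C2 γ α * PS i γ p))) = 0 := by
    simp [hD2]
  have c2 : ∑ p, Y2 p * (((∑ k, (Y1 k * PPS i α p k + PS i α k * P1 k p))
      - (∑ k, (S k α * PP1 i p k + P1 i k * PS k α p)))
      + (U1 * PS i α p + S i α * PU1 p)
      + (∑ γ, (S i γ * PC1 γ α p + C1 γ α * PS i γ p))) = 0 := by
    simp [hD1]
  have c3 : ∑ p, P1 i p * ((∑ k, Y2 k * PS p α k) - (∑ k, S k α * P2 p k) + U2 * S p α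
      + (∑ γ, S p γ * C2 γ α)) = 0 := by simp [hV2]
  have c4 : ∑ p, P2 i p * ((∑ k, Y1 k * PS p α k) - (∑ k, S k α * P1 p k) + U1 * S p α
      + (∑ γ, S p γ * C1 γ α)) = 0 := by simp [hV1]
  have c5 : ∑ β, C2 β α * ((∑ k, Y1 k * PS i β k) - (∑ k, S k β * P1 i k) + U1 * S i β
      + (∑ γ, S i γ * C1 γ β)) = 0 := by simp [hV1]
  have c6 : ∑ β, C1 β α * ((∑ k, Y2 k * PS i β k) - (∑ k, S k β * P2 i k) + U2 * S i β
      + (∑ γ, S i γ * C2 γ β)) = 0 := by simp [hV2]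
  have c7 : U2 * ((∑ k, Y1 k * PS i α k) - (∑ k, S k α * P1 i k) + U1 * S i α
      + (∑ γ, S i γ * C1 γ α)) = 0 := by rw [hV1 i α, mul_zero]
  have c8 : U1 * ((∑ k, Y2 k * PS i α k) - (∑ k, S k α * P2 i k) + U2 * S i α
      + (∑ γ, S i γ * C2 γ α)) = 0 := by rw [hV2 i α, mul_zero]
  have sA1 : (∑ x, ∑ y, Y1 x * (PS i α y * P2 y x)) = ∑ x, ∑ y, Y1 y * (P2 x y * PS i α x) := by
    rw [Finset.sum_comm]
    exact Finset.sum_congr rfl fun a _ => Finset.sum_congr rfl fun b _ => by ring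
  have sA2 : (∑ x, ∑ y, Y2 x * (PS i α y * P1 y x)) = ∑ x, ∑ y, Y2 y * (P1 x y * PS i α x) := by
    rw [Finset.sum_comm]
    exact Finset.sum_congr rfl fun a _ => Finset.sum_congr rfl fun b _ => by ring
  have sB : (∑ x, ∑ y, Y1 x * (Y2 y * PPS i α x y)) = ∑ x, ∑ y, Y2 x * (Y1 y * PPS i α x y) := by
    rw [Finset.sum_comm]
    exact Finset.sum_congr rfl fun a _ => Finset.sum_congr rfl fun b _ => by
      rw [hsymS]; ring
  have sC1 : (∑ x, ∑ y, Y1 x * (S y α * PP2 i x y)) = ∑ x, ∑ y, S x α * (Y1 y * PP2 i x y) := by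
    rw [Finset.sum_comm]
    exact Finset.sum_congr rfl fun a _ => Finset.sum_congr rfl fun b _ => by
      rw [hsym2]; ring
  have sC2 : (∑ x, ∑ y, Y2 x * (S y α * PP1 i x y)) = ∑ x, ∑ y, S x α * (Y2 y * PP1 i x y) := by
    rw [Finset.sum_comm]
    exact Finset.sum_congr rfl fun a _ => Finset.sum_congr rfl fun b _ => by
      rw [hsym1]; ring
  have sD1 : (∑ x, ∑ y, P2 i x * (Y1 y * PS x α y)) = ∑ x, ∑ y, Y1 x * (P2 i y * PS y α x) := by
    rw [Finset.sum_comm]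
    exact Finset.sum_congr rfl fun a _ => Finset.sum_congr rfl fun b _ => by ring
  have sD2 : (∑ x, ∑ y, P1 i x * (Y2 y * PS x α y)) = ∑ x, ∑ y, Y2 x * (P1 i y * PS y α x) := by
    rw [Finset.sum_comm]
    exact Finset.sum_congr rfl fun a _ => Finset.sum_congr rfl fun b _ => by ring
  have sE1 : (∑ x, ∑ y, P1 i x * (S y α * P2 x y)) = ∑ x, ∑ y, S x α * (P1 i y * P2 y x) := by
    rw [Finset.sum_comm]
    exact Finset.sum_congr rfl fun a _ => Finset.sum_congr rfl fun b _ => by ring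
  have sE2 : (∑ x, ∑ y, P2 i x * (S y α * P1 x y)) = ∑ x, ∑ y, S x α * (P2 i y * P1 y x) := by
    rw [Finset.sum_comm]
    exact Finset.sum_congr rfl fun a _ => Finset.sum_congr rfl fun b _ => by ring
  have sF1 : (∑ x : Fin n, ∑ y : Fin m, Y1 x * (S i y * PC2 y α x))
      = ∑ x : Fin m, ∑ y : Fin n, S i x * (Y1 y * PC2 x α y) := by
    rw [Finset.sum_comm]
    exact Finset.sum_congr rfl fun a _ => Finset.sum_congr rfl fun b _ => by ring
  have sF2 : (∑ x : Fin n, ∑ y : Fin m, Y2 x * (S i y * PC1 y α x))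
      = ∑ x : Fin m, ∑ y : Fin n, S i x * (Y2 y * PC1 x α y) := by
    rw [Finset.sum_comm]
    exact Finset.sum_congr rfl fun a _ => Finset.sum_congr rfl fun b _ => by ring
  have sG1 : (∑ x : Fin m, ∑ y : Fin n, C2 x α * (Y1 y * PS i x y))
      = ∑ x : Fin n, ∑ y : Fin m, Y1 x * (C2 y α * PS i y x) := by
    rw [Finset.sum_comm]
    exact Finset.sum_congr rfl fun a _ => Finset.sum_congr rfl fun b _ => by ring
  have sG2 : (∑ x : Fin m, ∑ y : Fin n, C1 x α * (Y2 y * PS i x y))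
      = ∑ x : Fin n, ∑ y : Fin m, Y2 x * (C1 y α * PS i y x) := by
    rw [Finset.sum_comm]
    exact Finset.sum_congr rfl fun a _ => Finset.sum_congr rfl fun b _ => by ring
  have sH1 : (∑ x : Fin m, ∑ y : Fin m, C2 x α * (S i y * C1 y x))
      = ∑ x : Fin m, ∑ y : Fin m, S i x * (C1 x y * C2 y α) := by
    rw [Finset.sum_comm]
    exact Finset.sum_congr rfl fun a _ => Finset.sum_congr rfl fun b _ => by ring
  have sH2 : (∑ x : Fin m, ∑ y : Fin m, C1 x α * (S i y * C2 y x))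
      = ∑ x : Fin m, ∑ y : Fin m, S i x * (C2 x y * C1 y α) := by
    rw [Finset.sum_comm]
    exact Finset.sum_congr rfl fun a _ => Finset.sum_congr rfl fun b _ => by ring
  have sI1 : (∑ x : Fin m, ∑ y : Fin n, C2 x α * (S y x * P1 i y))
      = ∑ x : Fin n, ∑ y : Fin m, P1 i x * (S x y * C2 y α) := by
    rw [Finset.sum_comm]
    exact Finset.sum_congr rfl fun a _ => Finset.sum_congr rfl fun b _ => by ring
  have sI2 : (∑ x : Fin m, ∑ y : Fin n, C1 x α * (S y x * P2 i y))
      = ∑ x : Fin n, ∑ y : Fin m, P2 i x * (S x y * C1 y α) := by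
    rw [Finset.sum_comm]
    exact Finset.sum_congr rfl fun a _ => Finset.sum_congr rfl fun b _ => by ring
  simp only [Finset.mul_sum, Finset.sum_mul, mul_add, add_mul, mul_sub, sub_mul,
    Finset.sum_add_distrib, Finset.sum_sub_distrib, mul_comm, mul_assoc, mul_left_comm]
    at c1 c2 c3 c4 c5 c6 c7 c8 sA1 sA2 sB sC1 sC2 sD1 sD2 sE1 sE2 sF1 sF2 sG1 sG2 sH1 sH2 sI1 sI2 ⊢
  linarith [c1, c2, c3, c4, c5, c6, c7, c8, sA1, sA2, sB, sC1, sC2, sD1, sD2, sE1, sE2,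
    sF1, sF2, sG1, sG2, sH1, sH2, sI1, sI2]


lemma sum3 {α β γ : Type*} [Fintype α] [Fintype β] [Fintype γ] (f : α → β → γ → ℝ) :
    ∑ a, ∑ b, ∑ c, f a b c = ∑ c, ∑ a, ∑ b, f a b c := by
  calc ∑ a, ∑ b, ∑ c, f a b c = ∑ a, ∑ c, ∑ b, f a b c :=
        Finset.sum_congr rfl fun a _ => Finset.sum_comm
    _ = ∑ c, ∑ a, ∑ b, f a b c := Finset.sum_comm

set_option maxHeartbeats 2000000 in
lemma finalAlg {n : ℕ} (Y1 Y2 : Fin n → ℝ) (P1 P2 : Fin n → Fin n → ℝ)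
    (PBi : Fin n → ℝ) (PPBi : Fin n → Fin n → ℝ) (Bi : ℝ)
    (T1 T2 : ℝ) (PT1 PT2 : Fin n → ℝ) (G1 G2 G12 G21 : ℝ) (PG1 PG2 : Fin n → ℝ)
    (hsym : ∀ p k, PPBi p k = PPBi k p)
    (hK1 : (∑ p, Y1 p * PG2 p) - G12 + T1 * G2 = 0)
    (hK2 : (∑ p, Y2 p * PG1 p) - G21 + T2 * G1 = 0)
    (hD2 : ∀ p, (∑ k, (Y2 k * PPBi p k + PBi k * P2 k p)) - PG2 p
      + (T2 * PBi p + Bi * PT2 p) = 0)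
    (hD1 : ∀ p, (∑ k, (Y1 k * PPBi p k + PBi k * P1 k p)) - PG1 p
      + (T1 * PBi p + Bi * PT1 p) = 0)
    (hV1 : (∑ k, Y1 k * PBi k) - G1 + T1 * Bi = 0)
    (hV2 : (∑ k, Y2 k * PBi k) - G2 + T2 * Bi = 0) :
    (∑ k, ((∑ p, Y1 p * P2 k p) - ∑ p, Y2 p * P1 k p) * PBi k)
    - (G12 - G21) + ((∑ p, Y1 p * PT2 p) - ∑ p, Y2 p * PT1 p) * Bi = 0 := by
  have cD2 : ∑ p, Y1 p * ((∑ k, (Y2 k * PPBi p k + PBi k * P2 k p)) - PG2 p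
      + (T2 * PBi p + Bi * PT2 p)) = 0 := by simp [hD2]
  have cD1 : ∑ p, Y2 p * ((∑ k, (Y1 k * PPBi p k + PBi k * P1 k p)) - PG1 p
      + (T1 * PBi p + Bi * PT1 p)) = 0 := by simp [hD1]
  have cV1 : T2 * ((∑ k, Y1 k * PBi k) - G1 + T1 * Bi) = 0 := by rw [hV1, mul_zero]
  have cV2 : T1 * ((∑ k, Y2 k * PBi k) - G2 + T2 * Bi) = 0 := by rw [hV2, mul_zero]
  have sw1 : (∑ p, ∑ k, Y1 p * (Y2 k * PPBi p k)) = ∑ p, ∑ k, Y2 p * (Y1 k * PPBi p k) := by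
    rw [Finset.sum_comm]
    exact Finset.sum_congr rfl fun a _ => Finset.sum_congr rfl fun b _ => by rw [hsym]; ring
  have sw2 : (∑ p, ∑ k, Y1 p * (PBi k * P2 k p)) = ∑ k, ∑ p, (Y1 p * P2 k p) * PBi k := by
    rw [Finset.sum_comm]
    exact Finset.sum_congr rfl fun a _ => Finset.sum_congr rfl fun b _ => by ring
  have sw3 : (∑ p, ∑ k, Y2 p * (PBi k * P1 k p)) = ∑ k, ∑ p, (Y2 p * P1 k p) * PBi k := by
    rw [Finset.sum_comm]
    exact Finset.sum_congr rfl fun a _ => Finset.sum_congr rfl fun b _ => by ring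
  have b1 : (∑ p, Y1 p * (T2 * PBi p)) = T2 * ∑ p, Y1 p * PBi p := by
    rw [Finset.mul_sum]; exact Finset.sum_congr rfl fun p _ => by ring
  have b2 : (∑ p, Y2 p * (T1 * PBi p)) = T1 * ∑ p, Y2 p * PBi p := by
    rw [Finset.mul_sum]; exact Finset.sum_congr rfl fun p _ => by ring
  have b3 : (∑ p, Y1 p * (Bi * PT2 p)) = (∑ p, Y1 p * PT2 p) * Bi := by
    rw [Finset.sum_mul]; exact Finset.sum_congr rfl fun p _ => by ring
  have b4 : (∑ p, Y2 p * (Bi * PT1 p)) = (∑ p, Y2 p * PT1 p) * Bi := by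
    rw [Finset.sum_mul]; exact Finset.sum_congr rfl fun p _ => by ring
  simp only [Finset.mul_sum, Finset.sum_mul, mul_add, add_mul, mul_sub, sub_mul,
    Finset.sum_add_distrib, Finset.sum_sub_distrib, mul_comm, mul_assoc, mul_left_comm]
    at cD2 cD1 cV1 cV2 hK1 hK2 sw1 sw2 sw3 b1 b2 b3 b4 ⊢
  linarith [cD2, cD1, cV1, cV2, hK1, hK2, sw1, sw2, sw3, b1, b2, b3, b4]

set_option maxHeartbeats 2000000 in
lemma eaAlg {n m : ℕ} (Y : Fin n → ℝ) (P : Fin n → Fin n → ℝ) (S : Fin n → Fin m → ℝ)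
    (PS : Fin n → Fin m → Fin n → ℝ) (T U : ℝ) (CC : Fin m → Fin m → ℝ)
    (hTU : T = 2 * U)
    (hC : ∀ β γ, CC β γ = - CC γ β)
    (hV : ∀ c β, (∑ k, Y k * PS c β k) - (∑ k, S k β * P c k) + U * S c β
      + (∑ γ, S c γ * CC γ β) = 0)
    (i j : Fin n) :
    (∑ k, Y k * ((1:ℝ)/2 * ∑ α, (S i α * PS j α k + S j α * PS i α k)))
    - (∑ l, ((1:ℝ)/2 * ∑ α, S l α * S j α) * P i l)
    - (∑ l, ((1:ℝ)/2 * ∑ α, S i α * S l α) * P j l)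
    + T * ((1:ℝ)/2 * ∑ α, S i α * S j α) = 0 := by
  have c1 : ∑ α, S j α * ((∑ k, Y k * PS i α k) - (∑ k, S k α * P i k) + U * S i α
      + (∑ γ, S i γ * CC γ α)) = 0 := by simp [hV]
  have c2 : ∑ α, S i α * ((∑ k, Y k * PS j α k) - (∑ k, S k α * P j k) + U * S j α
      + (∑ γ, S j γ * CC γ α)) = 0 := by simp [hV]
  have m1 : (∑ k, Y k * ((1:ℝ)/2 * ∑ α, (S i α * PS j α k + S j α * PS i α k)))
      = (∑ k, ∑ α, Y k * (S i α * PS j α k + S j α * PS i α k)) / 2 := by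
    rw [Finset.sum_div]
    exact Finset.sum_congr rfl fun k _ => by rw [← Finset.mul_sum]; ring
  have m2 : (∑ l, ((1:ℝ)/2 * ∑ α, S l α * S j α) * P i l)
      = (∑ l, ∑ α, S l α * S j α * P i l) / 2 := by
    rw [Finset.sum_div]
    exact Finset.sum_congr rfl fun l _ => by rw [← Finset.sum_mul]; ring
  have m3 : (∑ l, ((1:ℝ)/2 * ∑ α, S i α * S l α) * P j l)
      = (∑ l, ∑ α, S i α * S l α * P j l) / 2 := by
    rw [Finset.sum_div]
    exact Finset.sum_congr rfl fun l _ => by rw [← Finset.sum_mul]; ring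
  have m4 : T * ((1:ℝ)/2 * ∑ α, S i α * S j α) = U * ∑ α, S i α * S j α := by
    rw [hTU]; ring
  rw [m1, m2, m3, m4]
  have bY1 : (∑ α, ∑ k, S j α * (Y k * PS i α k)) = ∑ k, ∑ α, Y k * (S j α * PS i α k) := by
    rw [Finset.sum_comm]
    exact Finset.sum_congr rfl fun a _ => Finset.sum_congr rfl fun b _ => by ring
  have bY2 : (∑ α, ∑ k, S i α * (Y k * PS j α k)) = ∑ k, ∑ α, Y k * (S i α * PS j α k) := by
    rw [Finset.sum_comm]
    exact Finset.sum_congr rfl fun a _ => Finset.sum_congr rfl fun b _ => by ring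
  have bP1 : (∑ α, ∑ k, S j α * (S k α * P i k)) = ∑ k, ∑ α, S k α * S j α * P i k := by
    rw [Finset.sum_comm]
    exact Finset.sum_congr rfl fun a _ => Finset.sum_congr rfl fun b _ => by ring
  have bP2 : (∑ α, ∑ k, S i α * (S k α * P j k)) = ∑ k, ∑ α, S i α * S k α * P j k := by
    rw [Finset.sum_comm]
    exact Finset.sum_congr rfl fun a _ => Finset.sum_congr rfl fun b _ => by ring
  have bU1 : (∑ α, S j α * (U * S i α)) = U * ∑ α, S i α * S j α := by
    rw [Finset.mul_sum]
    exact Finset.sum_congr rfl fun a _ => by ring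
  have bU2 : (∑ α, S i α * (U * S j α)) = U * ∑ α, S i α * S j α := by
    rw [Finset.mul_sum]
    exact Finset.sum_congr rfl fun a _ => by ring
  have sw : (∑ α, ∑ γ, S j α * (S i γ * CC γ α)) = - ∑ α, ∑ γ, S i α * (S j γ * CC γ α) := by
    rw [Finset.sum_comm, ← Finset.sum_neg_distrib]
    refine Finset.sum_congr rfl fun a _ => ?_
    rw [← Finset.sum_neg_distrib]
    refine Finset.sum_congr rfl fun b _ => ?_
    rw [hC b a]; ring
  simp only [Finset.mul_sum, Finset.sum_mul, mul_add, add_mul, mul_sub, sub_mul,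
    Finset.sum_add_distrib, Finset.sum_sub_distrib, mul_comm, mul_assoc, mul_left_comm]
    at c1 c2 bY1 bY2 bP1 bP2 bU1 bU2 sw ⊢
  linarith [c1, c2, bY1, bY2, bP1, bP2, bU1, bU2, sw]

lemma sum3' {α β γ : Type*} [Fintype α] [Fintype β] [Fintype γ] (f : α → β → γ → ℝ) :
    ∑ a, ∑ b, ∑ c, f a b c = ∑ b, ∑ c, ∑ a, f a b c := by
  calc ∑ a, ∑ b, ∑ c, f a b c = ∑ b, ∑ a, ∑ c, f a b c := Finset.sum_comm
    _ = ∑ b, ∑ c, ∑ a, f a b c := Finset.sum_congr rfl fun b _ => Finset.sum_comm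

lemma sum3'' {α β γ : Type*} [Fintype α] [Fintype β] [Fintype γ] (f : α → β → γ → ℝ) :
    ∑ a, ∑ b, ∑ c, f a b c = ∑ c, ∑ b, ∑ a, f a b c := by
  calc ∑ a, ∑ b, ∑ c, f a b c = ∑ a, ∑ c, ∑ b, f a b c :=
        Finset.sum_congr rfl fun a _ => Finset.sum_comm
    _ = ∑ c, ∑ a, ∑ b, f a b c := Finset.sum_comm
    _ = ∑ c, ∑ b, ∑ a, f a b c := Finset.sum_congr rfl fun c _ => Finset.sum_comm

set_option maxHeartbeats 4000000 in
lemma genAlg {n : ℕ} (Y : Fin n → ℝ) (P : Fin n → Fin n → ℝ) (PPY : Fin n → Fin n → Fin n → ℝ)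
    (B : Fin n → ℝ) (PB : Fin n → Fin n → ℝ) (A : Fin n → Fin n → ℝ)
    (DA : Fin n → Fin n → Fin n → ℝ) (T : ℝ) (Pf : Fin n → ℝ) (PPf : Fin n → Fin n → ℝ)
    (PPPf : Fin n → Fin n → Fin n → ℝ)
    (hPPf : ∀ i j, PPf i j = PPf j i)
    (hP3a : ∀ p i j, PPPf p i j = PPPf i p j)
    (hP3b : ∀ p i j, PPPf p i j = PPPf p j i)
    (hE1 : ∀ c, (∑ k, Y k * PB c k) - ((∑ i, ∑ j, A i j * PPY c i j) + ∑ i, B i * P c i)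
      + T * B c = 0)
    (hEA : ∀ i j, (∑ k, Y k * DA i j k) - (∑ l, A l j * P i l) - (∑ l, A i l * P j l)
      + T * A i j = 0) :
    (∑ p, Y p * ((∑ i, ∑ j, (A i j * PPPf p i j + PPf i j * DA i j p))
        + ∑ i, (B i * PPf p i + Pf i * PB i p)))
    - ((∑ i, ∑ j, A i j * (∑ k, ((Y k * PPPf i j k + PPf j k * P k i)
        + (Pf k * PPY k i j + P k j * PPf i k))))
      + ∑ i, B i * (∑ k, (Y k * PPf i k + Pf k * P k i)))
    + T * ((∑ i, ∑ j, A i j * PPf i j) + ∑ i, B i * Pf i) = 0 := by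
  have cE1 : ∑ c, Pf c * ((∑ k, Y k * PB c k)
      - ((∑ i, ∑ j, A i j * PPY c i j) + ∑ i, B i * P c i) + T * B c) = 0 := by simp [hE1]
  have cEA : ∑ i, ∑ j, PPf i j * ((∑ k, Y k * DA i j k) - (∑ l, A l j * P i l)
      - (∑ l, A i l * P j l) + T * A i j) = 0 := by simp [hEA]
  have g1 : (∑ p, ∑ i, ∑ j, Y p * (A i j * PPPf p i j))
      = ∑ i, ∑ j, ∑ k, A i j * (Y k * PPPf i j k) := by
    rw [sum3' (fun p i j => Y p * (A i j * PPPf p i j))]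
    refine Finset.sum_congr rfl fun i _ => Finset.sum_congr rfl fun j _ =>
      Finset.sum_congr rfl fun p _ => ?_
    rw [hP3a p i j, hP3b i p j]; ring
  have g2 : (∑ p, ∑ i, ∑ j, Y p * (PPf i j * DA i j p))
      = ∑ i, ∑ j, ∑ k, PPf i j * (Y k * DA i j k) := by
    rw [sum3' (fun p i j => Y p * (PPf i j * DA i j p))]
    exact Finset.sum_congr rfl fun i _ => Finset.sum_congr rfl fun j _ =>
      Finset.sum_congr rfl fun p _ => by ring
  have g3 : (∑ p, ∑ i, Y p * (B i * PPf p i)) = ∑ i, ∑ k, B i * (Y k * PPf i k) := by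
    rw [Finset.sum_comm]
    refine Finset.sum_congr rfl fun i _ => Finset.sum_congr rfl fun p _ => ?_
    rw [hPPf p i]; ring
  have g4 : (∑ p, ∑ i, Y p * (Pf i * PB i p)) = ∑ c, ∑ k, Pf c * (Y k * PB c k) := by
    rw [Finset.sum_comm]
    exact Finset.sum_congr rfl fun i _ => Finset.sum_congr rfl fun p _ => by ring
  have g5 : (∑ i, ∑ j, ∑ k, A i j * (PPf j k * P k i))
      = ∑ i, ∑ j, ∑ l, PPf i j * (A l j * P i l) := by
    rw [sum3'' (fun i j k => A i j * (PPf j k * P k i))]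
    refine Finset.sum_congr rfl fun a _ => Finset.sum_congr rfl fun b _ =>
      Finset.sum_congr rfl fun c _ => ?_
    rw [hPPf b a]; ring
  have g6 : (∑ i, ∑ j, ∑ k, A i j * (P k j * PPf i k))
      = ∑ i, ∑ j, ∑ l, PPf i j * (A i l * P j l) := by
    refine Finset.sum_congr rfl fun i _ => ?_
    rw [Finset.sum_comm]
    exact Finset.sum_congr rfl fun a _ => Finset.sum_congr rfl fun b _ => by ring
  have g7 : (∑ i, ∑ j, ∑ k, A i j * (Pf k * PPY k i j))
      = ∑ c, ∑ i, ∑ j, Pf c * (A i j * PPY c i j) := by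
    rw [sum3 (fun i j k => A i j * (Pf k * PPY k i j))]
    exact Finset.sum_congr rfl fun c _ => Finset.sum_congr rfl fun i _ =>
      Finset.sum_congr rfl fun j _ => by ring
  have g8 : (∑ i, ∑ k, B i * (Pf k * P k i)) = ∑ c, ∑ i, Pf c * (B i * P c i) := by
    rw [Finset.sum_comm]
    exact Finset.sum_congr rfl fun a _ => Finset.sum_congr rfl fun b _ => by ring
  have bT1 : (∑ c, Pf c * (T * B c)) = T * ∑ i, B i * Pf i := by
    rw [Finset.mul_sum]
    exact Finset.sum_congr rfl fun c _ => by ring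
  have bT2 : (∑ i, ∑ j, PPf i j * (T * A i j)) = T * ∑ i, ∑ j, A i j * PPf i j := by
    rw [Finset.mul_sum]
    refine Finset.sum_congr rfl fun i _ => ?_
    rw [Finset.mul_sum]
    exact Finset.sum_congr rfl fun j _ => by ring
  simp only [Finset.mul_sum, Finset.sum_mul, mul_add, add_mul, mul_sub, sub_mul,
    Finset.sum_add_distrib, Finset.sum_sub_distrib, mul_comm, mul_assoc, mul_left_comm]
    at cE1 cEA g1 g2 g3 g4 g5 g6 g7 g8 bT1 bT2 ⊢
  linarith [cE1, cEA, g1, g2, g3, g4, g5, g6, g7, g8, bT1, bT2]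

lemma pd_vbracket {n : ℕ} {M : Set (Fin n → ℝ)} {x : Fin n → ℝ}
    {Y₁ Y₂ : (Fin n → ℝ) → Fin n → ℝ} (hM : IsOpen M)
    (hY₁ : ContDiffOn ℝ (⊤ : ℕ∞) Y₁ M) (hY₂ : ContDiffOn ℝ (⊤ : ℕ∞) Y₂ M) (hx : x ∈ M) (i k : Fin n) :
    pd (fun y => vbracket Y₁ Y₂ y i) k x
      = (∑ p, (Y₁ x p * pd (pd (fun y => Y₂ y i) p) k x
          + pd (fun y => Y₂ y i) p x * pd (fun y => Y₁ y p) k x))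
      - ∑ p, (Y₂ x p * pd (pd (fun y => Y₁ y i) p) k x
          + pd (fun y => Y₁ y i) p x * pd (fun y => Y₂ y p) k x) := by
  have dA : DifferentiableAt ℝ (fun y => ∑ p, Y₁ y p * pd (fun z => Y₂ z i) p y) x :=
    diffAt hM (smooth_sum_mul hM (fun p => smooth_comp hY₁ p)
      (fun p => contDiffOn_pd hM (smooth_comp hY₂ i) p)) hx
  have dB : DifferentiableAt ℝ (fun y => ∑ p, Y₂ y p * pd (fun z => Y₁ z i) p y) x :=
    diffAt hM (smooth_sum_mul hM (fun p => smooth_comp hY₂ p)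
      (fun p => contDiffOn_pd hM (smooth_comp hY₁ i) p)) hx
  show pd (fun y => (∑ p, Y₁ y p * pd (fun z => Y₂ z i) p y)
      - ∑ p, Y₂ y p * pd (fun z => Y₁ z i) p y) k x = _
  rw [pd_sub dA dB,
    pd_sum_mul hM (fun p => smooth_comp hY₁ p)
      (fun p => contDiffOn_pd hM (smooth_comp hY₂ i) p) hx,
    pd_sum_mul hM (fun p => smooth_comp hY₂ p)
      (fun p => contDiffOn_pd hM (smooth_comp hY₁ i) p) hx]

section Gen
variable {n m : ℕ} {M : Set (Fin n → ℝ)} {x : Fin n → ℝ}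
  {b : (Fin n → ℝ) → Fin n → ℝ} {σ : (Fin n → ℝ) → Matrix (Fin n) (Fin m) ℝ}
  {Y : (Fin n → ℝ) → Fin n → ℝ} {C : (Fin n → ℝ) → Matrix (Fin m) (Fin m) ℝ}
  {τ : (Fin n → ℝ) → ℝ} {f g : (Fin n → ℝ) → ℝ}

lemma smooth_A (hM : IsOpen M)
    (hσ : ContDiffOn ℝ (⊤ : ℕ∞) (fun x i α => σ x i α : (Fin n → ℝ) → Fin n → Fin m → ℝ) M)
    (i j : Fin n) :
    ContDiffOn ℝ (⊤ : ℕ∞) (fun y => (1:ℝ)/2 * ∑ α, σ y i α * σ y j α) M :=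
  contDiffOn_const.mul (ContDiffOn.sum fun α _ =>
    (smooth_comp2 hσ i α).mul (smooth_comp2 hσ j α))

lemma smooth_gen (hM : IsOpen M) (hb : ContDiffOn ℝ (⊤ : ℕ∞) b M)
    (hσ : ContDiffOn ℝ (⊤ : ℕ∞) (fun x i α => σ x i α : (Fin n → ℝ) → Fin n → Fin m → ℝ) M)
    (hf : ContDiffOn ℝ (⊤ : ℕ∞) f M) :
    ContDiffOn ℝ (⊤ : ℕ∞) (generator b σ f) M := by
  unfold generator
  refine ContDiffOn.add ?_ ?_
  · exact ContDiffOn.sum fun i _ => ContDiffOn.sum fun j _ =>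
      (smooth_A hM hσ i j).mul (contDiffOn_pd hM (contDiffOn_pd hM hf j) i)
  · exact ContDiffOn.sum fun i _ => (smooth_comp hb i).mul (contDiffOn_pd hM hf i)

lemma pdA (hM : IsOpen M)
    (hσ : ContDiffOn ℝ (⊤ : ℕ∞) (fun x i α => σ x i α : (Fin n → ℝ) → Fin n → Fin m → ℝ) M)
    (hx : x ∈ M) (i j p : Fin n) :
    pd (fun y => (1:ℝ)/2 * ∑ α, σ y i α * σ y j α) p x
      = (1:ℝ)/2 * ∑ α, (σ x i α * pd (fun y => σ y j α) p x
          + σ x j α * pd (fun y => σ y i α) p x) := by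
  rw [pd_const_mul (diffAt hM (ContDiffOn.sum fun α _ =>
      (smooth_comp2 hσ i α).mul (smooth_comp2 hσ j α)) hx),
    pd_sum_mul hM (fun α => smooth_comp2 hσ i α) (fun α => smooth_comp2 hσ j α) hx]

lemma pdgen (hM : IsOpen M) (hb : ContDiffOn ℝ (⊤ : ℕ∞) b M)
    (hσ : ContDiffOn ℝ (⊤ : ℕ∞) (fun x i α => σ x i α : (Fin n → ℝ) → Fin n → Fin m → ℝ) M)
    (hf : ContDiffOn ℝ (⊤ : ℕ∞) f M) (hx : x ∈ M) (p : Fin n) :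
    pd (generator b σ f) p x
      = (∑ i, ∑ j, (((1:ℝ)/2 * ∑ α, σ x i α * σ x j α) * pd (pd (pd f j) i) p x
          + pd (pd f j) i x * ((1:ℝ)/2 * ∑ α, (σ x i α * pd (fun y => σ y j α) p x
              + σ x j α * pd (fun y => σ y i α) p x))))
      + ∑ i, (b x i * pd (pd f i) p x + pd f i x * pd (fun y => b y i) p x) := by
  have dA : ∀ i j : Fin n, DifferentiableAt ℝ
      (fun y => ((1:ℝ)/2 * ∑ α, σ y i α * σ y j α) * pd (pd f j) i y) x :=
    fun i j => (diffAt hM (smooth_A hM hσ i j) hx).mul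
      (diffAt hM (contDiffOn_pd hM (contDiffOn_pd hM hf j) i) hx)
  have d1 : DifferentiableAt ℝ
      (fun y => ∑ i, ∑ j, ((1:ℝ)/2 * ∑ α, σ y i α * σ y j α) * pd (pd f j) i y) x :=
    DifferentiableAt.fun_sum fun i _ => DifferentiableAt.fun_sum fun j _ => dA i j
  have d2 : DifferentiableAt ℝ (fun y => ∑ i, b y i * pd f i y) x :=
    diffAt hM (smooth_sum_mul hM (fun i => smooth_comp hb i)
      (fun i => contDiffOn_pd hM hf i)) hx
  show pd (fun y => (∑ i, ∑ j, ((1:ℝ)/2 * ∑ α, σ y i α * σ y j α) * pd (pd f j) i y)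
      + ∑ i, b y i * pd f i y) p x = _
  rw [pd_add d1 d2,
    pd_sum Finset.univ (fun i _ => DifferentiableAt.fun_sum fun j _ => dA i j) p,
    pd_sum_mul hM (fun i => smooth_comp hb i) (fun i => contDiffOn_pd hM hf i) hx]
  congr 1
  refine Finset.sum_congr rfl fun i _ => ?_
  rw [pd_sum Finset.univ (fun j _ => dA i j) p]
  refine Finset.sum_congr rfl fun j _ => ?_
  rw [pd_mul (diffAt hM (smooth_A hM hσ i j) hx)
      (diffAt hM (contDiffOn_pd hM (contDiffOn_pd hM hf j) i) hx),
    pdA hM hσ hx i j p]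

lemma pdYf (hM : IsOpen M) (hY : ContDiffOn ℝ (⊤ : ℕ∞) Y M) (hf : ContDiffOn ℝ (⊤ : ℕ∞) f M)
    (hx : x ∈ M) (i : Fin n) :
    pd (fun y => ∑ k, Y y k * pd f k y) i x
      = ∑ k, (Y x k * pd (pd f k) i x + pd f k x * pd (fun y => Y y k) i x) :=
  pd_sum_mul hM (fun k => smooth_comp hY k) (fun k => contDiffOn_pd hM hf k) hx i

lemma pdpdYf (hM : IsOpen M) (hY : ContDiffOn ℝ (⊤ : ℕ∞) Y M) (hf : ContDiffOn ℝ (⊤ : ℕ∞) f M)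
    (hx : x ∈ M) (i j : Fin n) :
    pd (pd (fun y => ∑ k, Y y k * pd f k y) j) i x
      = ∑ k, ((Y x k * pd (pd (pd f k) j) i x
            + pd (pd f k) j x * pd (fun y => Y y k) i x)
          + (pd f k x * pd (pd (fun y => Y y k) j) i x
            + pd (fun y => Y y k) j x * pd (pd f k) i x)) := by
  rw [pd_congr hM (fun y hy => pdYf hM hY hf hy j) hx i,
    pd_sum Finset.univ (fun k _ => DifferentiableAt.fun_add
      ((diffAt hM (smooth_comp hY k) hx).fun_mul
        (diffAt hM (contDiffOn_pd hM (contDiffOn_pd hM hf k) j) hx))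
      ((diffAt hM (contDiffOn_pd hM hf k) hx).fun_mul
        (diffAt hM (contDiffOn_pd hM (smooth_comp hY k) j) hx))) i]
  refine Finset.sum_congr rfl fun k _ => ?_
  rw [pd_add ((diffAt hM (smooth_comp hY k) hx).fun_mul
        (diffAt hM (contDiffOn_pd hM (contDiffOn_pd hM hf k) j) hx))
      ((diffAt hM (contDiffOn_pd hM hf k) hx).fun_mul
        (diffAt hM (contDiffOn_pd hM (smooth_comp hY k) j) hx)),
    pd_mul (diffAt hM (smooth_comp hY k) hx)
      (diffAt hM (contDiffOn_pd hM (contDiffOn_pd hM hf k) j) hx),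
    pd_mul (diffAt hM (contDiffOn_pd hM hf k) hx)
      (diffAt hM (contDiffOn_pd hM (smooth_comp hY k) j) hx)]

lemma generator_sub (hM : IsOpen M) (hb : ContDiffOn ℝ (⊤ : ℕ∞) b M)
    (hσ : ContDiffOn ℝ (⊤ : ℕ∞) (fun x i α => σ x i α : (Fin n → ℝ) → Fin n → Fin m → ℝ) M)
    (hF : ContDiffOn ℝ (⊤ : ℕ∞) f M) (hG : ContDiffOn ℝ (⊤ : ℕ∞) g M) (hx : x ∈ M) :
    generator b σ (fun y => f y - g y) x = generator b σ f x - generator b σ g x := by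
  have d1 : ∀ i : Fin n, pd (fun y => f y - g y) i x = pd f i x - pd g i x :=
    fun i => pd_sub (diffAt hM hF hx) (diffAt hM hG hx) i
  have d2 : ∀ i j : Fin n, pd (pd (fun y => f y - g y) j) i x
      = pd (pd f j) i x - pd (pd g j) i x := by
    intro i j
    rw [pd_congr hM (fun y hy => pd_sub (diffAt hM hF hy) (diffAt hM hG hy) j) hx i]
    exact pd_sub (diffAt hM (contDiffOn_pd hM hF j) hx)
      (diffAt hM (contDiffOn_pd hM hG j) hx) i
  show (∑ i, ∑ j, ((1:ℝ)/2 * ∑ α, σ x i α * σ x j α) * pd (pd (fun y => f y - g y) j) i x)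
      + (∑ i, b x i * pd (fun y => f y - g y) i x) = _
  simp only [d1, d2, generator]
  simp only [mul_sub, Finset.sum_sub_distrib]
  ring

lemma e1deriv (hM : IsOpen M) (hb : ContDiffOn ℝ (⊤ : ℕ∞) b M)
    (hσ : ContDiffOn ℝ (⊤ : ℕ∞) (fun x i α => σ x i α : (Fin n → ℝ) → Fin n → Fin m → ℝ) M)
    (hY : ContDiffOn ℝ (⊤ : ℕ∞) Y M) (hτ : ContDiffOn ℝ (⊤ : ℕ∞) τ M)
    (h1 : ∀ x ∈ M, ∀ c, (∑ k, Y x k * pd (fun y => b y c) k x)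
      - generator b σ (fun y => Y y c) x + τ x * b x c = 0) :
    ∀ x ∈ M, ∀ c (p : Fin n),
      (∑ k, (Y x k * pd (pd (fun y => b y c) k) p x
          + pd (fun y => b y c) k x * pd (fun y => Y y k) p x))
      - pd (generator b σ (fun y => Y y c)) p x
      + (τ x * pd (fun y => b y c) p x + b x c * pd τ p x) = 0 := by
  intro x hx c p
  have dS : DifferentiableAt ℝ (fun y => ∑ k, Y y k * pd (fun z => b z c) k y) x :=
    diffAt hM (smooth_sum_mul hM (fun k => smooth_comp hY k)
      (fun k => contDiffOn_pd hM (smooth_comp hb c) k)) hx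
  have dG : DifferentiableAt ℝ (generator b σ (fun y => Y y c)) x :=
    diffAt hM (smooth_gen hM hb hσ (smooth_comp hY c)) hx
  have dP : DifferentiableAt ℝ (fun y => τ y * b y c) x :=
    (diffAt hM hτ hx).mul (diffAt hM (smooth_comp hb c) hx)
  have h0 : pd (fun y => (∑ k, Y y k * pd (fun z => b z c) k y)
      - generator b σ (fun z => Y z c) y + τ y * b y c) p x = 0 :=
    pd_zero_of hM (fun y hy => h1 y hy c) hx p
  rw [pd_add (dS.fun_sub dG) dP, pd_sub dS dG,
    pd_sum_mul hM (fun k => smooth_comp hY k)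
      (fun k => contDiffOn_pd hM (smooth_comp hb c) k) hx,
    pd_mul (diffAt hM hτ hx) (diffAt hM (smooth_comp hb c) hx)] at h0
  exact h0

lemma Kcomm (hM : IsOpen M) (hb : ContDiffOn ℝ (⊤ : ℕ∞) b M)
    (hσ : ContDiffOn ℝ (⊤ : ℕ∞) (fun x i α => σ x i α : (Fin n → ℝ) → Fin n → Fin m → ℝ) M)
    (hY : ContDiffOn ℝ (⊤ : ℕ∞) Y M) (hτ : ContDiffOn ℝ (⊤ : ℕ∞) τ M)
    (hCanti : ∀ x ∈ M, (C x)ᵀ = -C x)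
    (h1 : ∀ x ∈ M, ∀ c, (∑ k, Y x k * pd (fun y => b y c) k x)
      - generator b σ (fun y => Y y c) x + τ x * b x c = 0)
    (h2 : ∀ x ∈ M, mbracket Y σ x + (τ x / 2) • σ x + σ x * C x = 0)
    (hf : ContDiffOn ℝ (⊤ : ℕ∞) f M) :
    ∀ x ∈ M, (∑ p, Y x p * pd (generator b σ f) p x)
      - generator b σ (fun y => ∑ k, Y y k * pd f k y) x
      + τ x * generator b σ f x = 0 := by
  intro x hx
  have hC' : ∀ β γ, C x β γ = - C x γ β := by
    intro β γ
    have := congrFun (congrFun (hCanti x hx) γ) β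
    simpa [Matrix.transpose_apply, Matrix.neg_apply] using this
  have hEA : ∀ i j : Fin n,
      (∑ k, Y x k * ((1:ℝ)/2 * ∑ α, (σ x i α * pd (fun y => σ y j α) k x
          + σ x j α * pd (fun y => σ y i α) k x)))
      - (∑ l, ((1:ℝ)/2 * ∑ α, σ x l α * σ x j α) * pd (fun y => Y y i) l x)
      - (∑ l, ((1:ℝ)/2 * ∑ α, σ x i α * σ x l α) * pd (fun y => Y y j) l x)
      + τ x * ((1:ℝ)/2 * ∑ α, σ x i α * σ x j α) = 0 := by
    intro i j
    exact eaAlg (Y x) (fun c k => pd (fun y => Y y c) k x) (σ x)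
      (fun c β k => pd (fun y => σ y c β) k x) (τ x) (τ x / 2) (C x)
      (by ring) hC' (e2val h2 x hx) i j
  have hE1 : ∀ c, (∑ k, Y x k * pd (fun y => b y c) k x)
      - ((∑ i, ∑ j, ((1:ℝ)/2 * ∑ α, σ x i α * σ x j α)
          * pd (pd (fun y => Y y c) j) i x)
        + ∑ i, b x i * pd (fun y => Y y c) i x)
      + τ x * b x c = 0 := by
    intro c
    have := h1 x hx c
    simpa only [generator] using this
  have e1 : ∀ p : Fin n, pd (generator b σ f) p x
      = (∑ i, ∑ j, (((1:ℝ)/2 * ∑ α, σ x i α * σ x j α) * pd (pd (pd f j) i) p x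
          + pd (pd f j) i x * ((1:ℝ)/2 * ∑ α, (σ x i α * pd (fun y => σ y j α) p x
              + σ x j α * pd (fun y => σ y i α) p x))))
      + ∑ i, (b x i * pd (pd f i) p x + pd f i x * pd (fun y => b y i) p x) :=
    fun p => pdgen hM hb hσ hf hx p
  simp only [e1]
  simp only [generator]
  simp only [pdpdYf hM hY hf hx, pdYf hM hY hf hx]
  exact genAlg (Y x) (fun k i => pd (fun y => Y y k) i x)
    (fun k i j => pd (pd (fun y => Y y k) j) i x) (b x)
    (fun c k => pd (fun y => b y c) k x)
    (fun i j => (1:ℝ)/2 * ∑ α, σ x i α * σ x j α)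
    (fun i j p => (1:ℝ)/2 * ∑ α, (σ x i α * pd (fun y => σ y j α) p x
        + σ x j α * pd (fun y => σ y i α) p x))
    (τ x) (fun k => pd f k x) (fun i j => pd (pd f j) i x)
    (fun p i j => pd (pd (pd f j) i) p x)
    (fun i j => pd_comm hM hf hx j i)
    (fun p i j => pd_comm hM (contDiffOn_pd hM hf j) hx i p)
    (fun p i j => by
      show pd (pd (pd f j) i) p x = pd (pd (pd f i) j) p x
      rw [pd_congr hM (fun y hy => pd_comm hM hf hy j i) hx p])
    hE1 hEA

end Gen

set_option maxHeartbeats 4000000 in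
/-- the bracket
[V₁, V₂] = ([Y₁, Y₂], Y₁(C₂) − Y₂(C₁) − {C₁, C₂}, Y₁(τ₂) − Y₂(τ₁))
of two general infinitesimal symmetries of the SDE (b, σ) is again a general
infinitesimal symmetry of (b, σ). -/
theorem bracket_of_symmetries_is_symmetry {n m : ℕ}
    (M : Set (Fin n → ℝ)) (hM : IsOpen M)
    (b : (Fin n → ℝ) → Fin n → ℝ) (σ : (Fin n → ℝ) → Matrix (Fin n) (Fin m) ℝ)
    (hb : ContDiffOn ℝ (⊤ : ℕ∞) b M)
    (hσ : ContDiffOn ℝ (⊤ : ℕ∞) (fun x i α => σ x i α : (Fin n → ℝ) → Fin n → Fin m → ℝ) M)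
    (Y₁ Y₂ : (Fin n → ℝ) → Fin n → ℝ)
    (C₁ C₂ : (Fin n → ℝ) → Matrix (Fin m) (Fin m) ℝ)
    (τ₁ τ₂ : (Fin n → ℝ) → ℝ)
    (hY₁ : ContDiffOn ℝ (⊤ : ℕ∞) Y₁ M) (hY₂ : ContDiffOn ℝ (⊤ : ℕ∞) Y₂ M)
    (hC₁ : ContDiffOn ℝ (⊤ : ℕ∞) (fun x i j => C₁ x i j : (Fin n → ℝ) → Fin m → Fin m → ℝ) M)
    (hC₂ : ContDiffOn ℝ (⊤ : ℕ∞) (fun x i j => C₂ x i j : (Fin n → ℝ) → Fin m → Fin m → ℝ) M)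
    (hτ₁ : ContDiffOn ℝ (⊤ : ℕ∞) τ₁ M) (hτ₂ : ContDiffOn ℝ (⊤ : ℕ∞) τ₂ M)
    (hC₁anti : ∀ x ∈ M, (C₁ x)ᵀ = -C₁ x) (hC₂anti : ∀ x ∈ M, (C₂ x)ᵀ = -C₂ x)
    (h₁ : IsInfinitesimalSymmetry M b σ Y₁ C₁ τ₁)
    (h₂ : IsInfinitesimalSymmetry M b σ Y₂ C₂ τ₂) :
    IsInfinitesimalSymmetry M b σ
      (vbracket Y₁ Y₂)
      (fun x => dirDeriv Y₁ C₂ x - dirDeriv Y₂ C₁ x - (C₁ x * C₂ x - C₂ x * C₁ x))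
      (fun x => (∑ k, Y₁ x k * pd τ₂ k x) - ∑ k, Y₂ x k * pd τ₁ k x) := by
  constructor
  · intro x hx i
    have hF : ContDiffOn ℝ (⊤ : ℕ∞) (fun y => ∑ k, Y₁ y k * pd (fun z => Y₂ z i) k y) M :=
      smooth_sum_mul hM (fun k => smooth_comp hY₁ k)
        (fun k => contDiffOn_pd hM (smooth_comp hY₂ i) k)
    have hG : ContDiffOn ℝ (⊤ : ℕ∞) (fun y => ∑ k, Y₂ y k * pd (fun z => Y₁ z i) k y) M :=
      smooth_sum_mul hM (fun k => smooth_comp hY₂ k)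
        (fun k => contDiffOn_pd hM (smooth_comp hY₁ i) k)
    have gsub : generator b σ (fun y => vbracket Y₁ Y₂ y i) x
        = generator b σ (fun y => ∑ k, Y₁ y k * pd (fun z => Y₂ z i) k y) x
          - generator b σ (fun y => ∑ k, Y₂ y k * pd (fun z => Y₁ z i) k y) x := by
      exact generator_sub hM hb hσ hF hG hx
    rw [gsub]
    simp only [vbracket]
    exact finalAlg (Y₁ x) (Y₂ x)
      (fun c k => pd (fun y => Y₁ y c) k x) (fun c k => pd (fun y => Y₂ y c) k x)
      (fun k => pd (fun y => b y i) k x)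
      (fun p k => pd (pd (fun y => b y i) k) p x) (b x i)
      (τ₁ x) (τ₂ x) (fun p => pd τ₁ p x) (fun p => pd τ₂ p x)
      (generator b σ (fun y => Y₁ y i) x) (generator b σ (fun y => Y₂ y i) x)
      (generator b σ (fun y => ∑ k, Y₁ y k * pd (fun z => Y₂ z i) k y) x)
      (generator b σ (fun y => ∑ k, Y₂ y k * pd (fun z => Y₁ z i) k y) x)
      (fun p => pd (generator b σ (fun y => Y₁ y i)) p x)
      (fun p => pd (generator b σ (fun y => Y₂ y i)) p x)
      (fun p k => pd_comm hM (smooth_comp hb i) hx k p)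
      (Kcomm hM hb hσ hY₁ hτ₁ hC₁anti h₁.1 h₁.2 (smooth_comp hY₂ i) x hx)
      (Kcomm hM hb hσ hY₂ hτ₂ hC₂anti h₂.1 h₂.2 (smooth_comp hY₁ i) x hx)
      (e1deriv hM hb hσ hY₂ hτ₂ h₂.1 x hx i)
      (e1deriv hM hb hσ hY₁ hτ₁ h₁.1 x hx i)
      (h₁.1 x hx i) (h₂.1 x hx i)
  · intro x hx
    ext i α
    have ht : ((∑ k, Y₁ x k * pd τ₂ k x) - ∑ k, Y₂ x k * pd τ₁ k x) / 2
        = (∑ k, Y₁ x k * (pd τ₂ k x / 2)) - ∑ k, Y₂ x k * (pd τ₁ k x / 2) := by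
      rw [sub_div, Finset.sum_div, Finset.sum_div]
      congr 1 <;> exact Finset.sum_congr rfl fun k _ => by ring
    simp only [mbracket, Matrix.add_apply, Matrix.smul_apply, Matrix.zero_apply,
      smul_eq_mul, pd_vbracket hM hY₁ hY₂ hx, ht]
    simp only [vbracket, dirDeriv, Matrix.mul_apply, Matrix.sub_apply]
    exact sigmaAlg (Y₁ x) (Y₂ x)
      (fun c k => pd (fun y => Y₁ y c) k x) (fun c k => pd (fun y => Y₂ y c) k x)
      (fun c p k => pd (pd (fun y => Y₁ y c) k) p x)
      (fun c p k => pd (pd (fun y => Y₂ y c) k) p x)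
      (σ x) (fun c β k => pd (fun y => σ y c β) k x)
      (fun c β p k => pd (pd (fun y => σ y c β) k) p x)
      (τ₁ x / 2) (τ₂ x / 2) (fun p => pd τ₁ p x / 2) (fun p => pd τ₂ p x / 2)
      (C₁ x) (C₂ x)
      (fun β γ p => pd (fun y => C₁ y β γ) p x) (fun β γ p => pd (fun y => C₂ y β γ) p x) i α
      (fun c β p k => pd_comm hM (smooth_comp2 hσ c β) hx k p)
      (fun c p k => pd_comm hM (smooth_comp hY₁ c) hx k p)
      (fun c p k => pd_comm hM (smooth_comp hY₂ c) hx k p)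
      (e2val h₁.2 x hx) (e2val h₂.2 x hx)
      (e2deriv hM hσ hY₁ hC₁ hτ₁ h₁.2 x hx i α)
      (e2deriv hM hσ hY₂ hC₂ hτ₂ h₂.2 x hx i α)
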